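/- For b ∈ (0, 1/4), define N(b) = ⌈−1/2 + (1/2)√(1 + 2/b)⌉ and f(b) = 1/(12·N(b)²) + b²(N(b)² − 1)/3 + b². Then there exists a constant C > 0 such that f(b) ≤ C·b for all b ∈ (0, 1/4); that is, the sender's covert-signaling equilibrium loss −U^{CS} = f(b) is of first order O(b) in the incentive bias (in contrast with the second-order overt-persuasion loss −U^{OP} = b²). -/

import Mathlib

noncomputable section

/-- The number of cells of the Pareto-superior partition equilibrium:
`N(b) = ⌈-1/2 + (1/2)√(1 + 2/b)⌉`, viewed as a real number. -/
def Ncells (b : ℝ) : ℝ :=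
  ((⌈(-1 / 2 : ℝ) + Real.sqrt (1 + 2 / b) / 2⌉ : ℤ) : ℝ)

/-- The magnitude of the sender's best covert-signaling equilibrium payoff:
`f(b) = 1/(12 N(b)²) + b²(N(b)² - 1)/3 + b²`, so that `U^CS = -f(b)`. -/
def fCS (b : ℝ) : ℝ :=
  1 / (12 * (Ncells b) ^ 2) + b ^ 2 * ((Ncells b) ^ 2 - 1) / 3 + b ^ 2

/-!
Write `s = √(1 + 2/b)`, so that `N(b) = ⌈(s - 1)/2⌉` lies in `[(s - 1)/2, (s + 1)/2)`.
Hence `N(b)² ≤ s² = 1 + 2/b`, which makes the term `b²(N(b)² - 1)/3` at most `2b/3`,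
and for `b ≤ 1/4` we have `s ≥ 3`, so `N(b) ≥ s/3` and `N(b)² ≥ 2/(9b)`, which makes the
term `1/(12 N(b)²)` at most `3b/8`. Together with `b² ≤ b/4` this gives `f(b) ≤ 2b`.
-/

open Real

lemma Ncells_bounds (b : ℝ) :
    (√(1 + 2 / b) - 1) / 2 ≤ Ncells b ∧ Ncells b < (√(1 + 2 / b) + 1) / 2 := by
  have hle := Int.le_ceil ((-1 / 2 : ℝ) + √(1 + 2 / b) / 2)
  have hlt := Int.ceil_lt_add_one ((-1 / 2 : ℝ) + √(1 + 2 / b) / 2)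
  unfold Ncells
  constructor <;> linarith

lemma Ncells_sq_le {b : ℝ} (hb : 0 ≤ b) : Ncells b ^ 2 ≤ 1 + 2 / b := by
  obtain ⟨hlo, hhi⟩ := Ncells_bounds b
  have hs : 1 ≤ √(1 + 2 / b) := one_le_sqrt.mpr (le_add_of_nonneg_right (by positivity))
  rw [← sq_sqrt (by positivity : (0 : ℝ) ≤ 1 + 2 / b)]
  exact pow_le_pow_left₀ (by linarith) (by linarith) 2

lemma Ncells_sq_ge {b : ℝ} (hb : 0 < b) (hb4 : b ≤ 1 / 4) : 2 / (9 * b) ≤ Ncells b ^ 2 := by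
  obtain ⟨hlo, -⟩ := Ncells_bounds b
  have h8 : 8 ≤ 2 / b := by rw [le_div_iff₀ hb]; linarith
  have hs : 3 ≤ √(1 + 2 / b) := le_sqrt_of_sq_le (by linarith)
  have hsq : √(1 + 2 / b) ^ 2 = 1 + 2 / b := sq_sqrt (by positivity)
  calc 2 / (9 * b) ≤ (1 + 2 / b) / 9 := by rw [div_mul_eq_div_div_swap]; linarith
    _ = (√(1 + 2 / b) / 3) ^ 2 := by rw [div_pow, hsq]; norm_num
    _ ≤ Ncells b ^ 2 := pow_le_pow_left₀ (by positivity) (by linarith) 2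

theorem fCS_le_two_mul {b : ℝ} (hb : 0 < b) (hb4 : b ≤ 1 / 4) : fCS b ≤ 2 * b := by
  have hfirst : 1 / (12 * Ncells b ^ 2) ≤ 3 * b / 8 :=
    calc 1 / (12 * Ncells b ^ 2) ≤ 1 / (12 * (2 / (9 * b))) := by
          gcongr; exact Ncells_sq_ge hb hb4
      _ = 3 * b / 8 := by field_simp; ring
  have hsecond : b ^ 2 * (Ncells b ^ 2 - 1) / 3 ≤ 2 * b / 3 :=
    calc b ^ 2 * (Ncells b ^ 2 - 1) / 3 ≤ b ^ 2 * (1 + 2 / b - 1) / 3 := by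
          gcongr; exact Ncells_sq_le hb.le
      _ = 2 * b / 3 := by field_simp; ring
  have hthird : b ^ 2 ≤ b / 4 := by nlinarith
  unfold fCS
  linarith

theorem stmt_19 :
    ∃ C : ℝ, 0 < C ∧ ∀ b : ℝ, b ∈ Set.Ioo (0 : ℝ) (1 / 4) → fCS b ≤ C * b :=
  ⟨2, two_pos, fun _ hb => fCS_le_two_mul hb.1 hb.2.le⟩

end
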